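/- arXiv:2508.02457 — 3 statements merged into one kernel-verified Lean document; each statement's English description precedes it below -/
import Mathlib

section
/- Let (Ω, P) be a probability space, let N : Ω → ℕ be measurable, and let Θ : ℕ → Ω → ℝ be a sequence of measurable functions with Θ j ω > 0 for all j and ω. Assume exchangeability: for every n ∈ ℕ and every permutation σ of Fin n, the pushforward of the restriction of P to the event {N = n} under ω ↦ (Θ (σ i) ω)_{i : Fin n} equals its pushforward under ω ↦ (Θ i ω)_{i : Fin n}. Fix k ∈ ℕ and g : Fin k → ℕ, and assume all integrands below are integrable. Then ∫_Ω ∏_{i : Fin k} ( ∑_{j < N ω} (Θ j ω)^(1 − g i) ) dP(ω) = ∑_p ∫_Ω Nat.descFactorial (N ω) (number of parts of p) · ∏_{q ∈ p.parts} (Θ (ι q) ω)^(∑_{i ∈ q} (1 − g i)) dP(ω), where the sum runs over all finpartitions p of the full finset of Fin k, ι is any fixed injective enumeration of the parts of p by the numbers 0, …, (number of parts of p) − 1, and all powers are integer powers (zpow). -/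
/-!
Expanding the product, `∏ i, ∑ j < n, θ j ^ e i` is a sum over all maps `x : Fin k → Fin n`.
Grouping the maps by the partition of `Fin k` into the level sets of `x`, a partition `p`
contributes one term `∏ q ∈ p, θ (h q) ^ ∑ i ∈ q, e i` for every injective labelling
`h : p.parts ↪ Fin n` of its parts. On the event `{N = n}` exchangeability gives all these
labellings the expectation of the fixed labelling `ι p`, and there are `n.descFactorial #p.parts`
of them. Summing over the values of `N` gives the identity.
-/

open MeasureTheory ProbabilityTheory Finset

namespace Finpartition

variable {ι β : Type*} [Fintype ι] [DecidableEq ι]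

def partOf (p : Finpartition (univ : Finset ι)) (i : ι) : p.parts :=
  ⟨p.part i, p.part_mem.2 (mem_univ i)⟩

lemma partOf_eq_iff (p : Finpartition (univ : Finset ι)) {i : ι} {q : p.parts} :
    p.partOf i = q ↔ i ∈ (q : Finset ι) := by
  rw [partOf, Subtype.ext_iff, p.part_eq_iff_mem q.2]

lemma partOf_surjective (p : Finpartition (univ : Finset ι)) : Function.Surjective p.partOf := by
  rintro q
  obtain ⟨i, hi⟩ := p.nonempty_of_mem_parts q.2
  exact ⟨i, p.partOf_eq_iff.2 hi⟩

lemma partOf_eq_partOf_iff (p : Finpartition (univ : Finset ι)) {i j : ι} :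
    p.partOf i = p.partOf j ↔ j ∈ p.part i := by
  rw [partOf, partOf, Subtype.mk.injEq, p.mem_part_iff_part_eq_part (mem_univ j) (mem_univ i),
    eq_comm]

lemma mem_parts_iff_exists_part_eq (p : Finpartition (univ : Finset ι)) {t : Finset ι} :
    t ∈ p.parts ↔ ∃ i, p.part i = t := by
  refine ⟨fun ht => ?_, fun ⟨i, hi⟩ => hi ▸ p.part_mem.2 (mem_univ i)⟩
  obtain ⟨i, -, hi⟩ := p.part_surjOn ht
  exact ⟨i, hi⟩

lemma ext_part {p p' : Finpartition (univ : Finset ι)} (h : ∀ i, p.part i = p'.part i) :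
    p = p' := by
  ext t
  simp only [mem_parts_iff_exists_part_eq, h]

variable [DecidableEq β]

lemma ofSetoid_ker_eq_iff (x : ι → β) (p : Finpartition (univ : Finset ι)) :
    ofSetoid (Setoid.ker x) = p ↔ ∀ i j, x i = x j ↔ p.partOf i = p.partOf j := by
  have hker : ∀ i j, j ∈ (ofSetoid (Setoid.ker x)).part i ↔ x i = x j :=
    fun _ _ => mem_part_ofSetoid_iff_rel
  constructor
  · rintro rfl i j
    rw [partOf_eq_partOf_iff, hker]
  · intro hx
    refine ext_part fun i => ?_
    ext j
    rw [hker, hx, partOf_eq_partOf_iff]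

lemma ofSetoid_ker_eq_iff_exists_embedding (x : ι → β) (p : Finpartition (univ : Finset ι)) :
    ofSetoid (Setoid.ker x) = p ↔ ∃ h : p.parts ↪ β, h ∘ p.partOf = x := by
  rw [ofSetoid_ker_eq_iff]
  constructor
  · intro hx
    have hrep := Function.surjInv_eq p.partOf_surjective
    refine ⟨⟨x ∘ Function.surjInv p.partOf_surjective, fun q q' hqq' => ?_⟩, ?_⟩
    · rw [← hrep q, ← hrep q']
      exact (hx _ _).1 hqq'
    · funext i
      exact (hx _ _).2 (hrep _)
  · rintro ⟨h, rfl⟩ i j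
    exact h.injective.eq_iff

theorem sum_fiber_ofSetoid_ker {M : Type*} [AddCommMonoid M] [Fintype β]
    (p : Finpartition (univ : Finset ι)) (F : (ι → β) → M) :
    ∑ x with ofSetoid (Setoid.ker x) = p, F x = ∑ h : p.parts ↪ β, F (h ∘ p.partOf) := by
  let compPartOf : (p.parts ↪ β) ↪ (ι → β) :=
    ⟨fun h => h ∘ p.partOf, fun h h' hh' => DFunLike.ext _ _
      (p.partOf_surjective.forall.2 (congrFun hh'))⟩
  calc ∑ x with ofSetoid (Setoid.ker x) = p, F x = ∑ x ∈ univ.map compPartOf, F x := by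
        congr 1
        ext x
        simp only [mem_filter, mem_univ, true_and, mem_map, ofSetoid_ker_eq_iff_exists_embedding]
        rfl
    _ = _ := sum_map univ compPartOf F

theorem prod_univ_sum_eq_sum_finpartition {R : Type*} [CommSemiring R] [Fintype β]
    (f : ι → β → R) :
    ∏ i, ∑ j, f i j =
      ∑ p : Finpartition (univ : Finset ι), ∑ h : p.parts ↪ β,
        ∏ q : p.parts, ∏ i ∈ q.1, f i (h q) := by
  rw [prod_univ_sum, Fintype.piFinset_univ,
    ← sum_fiberwise univ (fun x : ι → β => ofSetoid (Setoid.ker x))]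
  refine sum_congr rfl fun p _ => ?_
  rw [sum_fiber_ofSetoid_ker]
  refine sum_congr rfl fun h _ => ?_
  rw [← prod_fiberwise univ p.partOf]
  refine prod_congr rfl fun q _ => ?_
  have hq : ({i | p.partOf i = q} : Finset ι) = q := by
    ext i
    simp only [mem_filter, mem_univ, true_and, p.partOf_eq_iff]
  exact prod_congr hq fun i hi => by rw [Function.comp_apply, p.partOf_eq_iff.2 hi]

end Finpartition

theorem prod_zpow_eq_zpow_sum₀ {ι G₀ : Type*} [CommGroupWithZero G₀] {a : G₀} (ha : a ≠ 0)
    (s : Finset ι) (e : ι → ℤ) : ∏ i ∈ s, a ^ e i = a ^ ∑ i ∈ s, e i := by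
  classical
  induction s using Finset.induction_on with
  | empty => simp
  | insert i s hi ih => rw [prod_insert hi, sum_insert hi, zpow_add₀ ha, ih]

theorem prod_sum_zpow_eq_sum_finpartition {ι β K : Type*} [Fintype ι] [DecidableEq ι]
    [Fintype β] [DecidableEq β] [Semifield K] {a : β → K} (ha : ∀ j, a j ≠ 0) (e : ι → ℤ) :
    ∏ i, ∑ j, a j ^ e i =
      ∑ p : Finpartition (univ : Finset ι), ∑ h : p.parts ↪ β,
        ∏ q : p.parts, a (h q) ^ ∑ i ∈ q.1, e i := by
  rw [Finpartition.prod_univ_sum_eq_sum_finpartition fun i j => a j ^ e i]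
  simp_rw [prod_zpow_eq_zpow_sum₀ (ha _)]

theorem ProbabilityTheory.identDistrib_comp_embedding {Ω α β γ : Type*} [MeasurableSpace Ω]
    {μ : Measure Ω} [MeasurableSpace γ] [Finite β]
    {Z : Ω → α → γ} (hZ : ∀ σ : Equiv.Perm α, IdentDistrib (fun ω i => Z ω (σ i)) Z μ μ)
    (u v : β ↪ α) : IdentDistrib (fun ω q => Z ω (u q)) (fun ω q => Z ω (v q)) μ μ := by
  obtain ⟨σ, hσ⟩ := Equiv.Perm.exists_extending_pair v u v.injective u.injective
  have hrestrict : Measurable fun (w : α → γ) q => w (v q) :=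
    measurable_pi_lambda _ fun q => measurable_pi_apply (v q)
  simpa only [Function.comp_def, hσ] using (hZ σ).comp hrestrict

section Stratum

variable {Ω : Type*} [MeasurableSpace Ω]

def IsExchangeable (μ : Measure Ω) (Θ : ℕ → Ω → ℝ) (n : ℕ) : Prop :=
  ∀ σ : Equiv.Perm (Fin n), μ.map (fun ω i => Θ (σ i : ℕ) ω) = μ.map (fun ω (i : Fin n) => Θ i ω)

variable {μ : Measure Ω} {n : ℕ} {Θ : ℕ → Ω → ℝ}

theorem identDistrib_prod_zpow_of_injective {β : Type*} [Fintype β]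
    (hΘ : ∀ j, Measurable (Θ j))
    (hexch : IsExchangeable μ Θ n)
    (E : β → ℤ) {c : β → ℕ} (hc_inj : Function.Injective c)
    (hc_lt : ∀ q, c q < Fintype.card β) (h : β ↪ Fin n) :
    IdentDistrib (fun ω => ∏ q, Θ (h q) ω ^ E q) (fun ω => ∏ q, Θ (c q) ω ^ E q) μ μ := by
  have hcard : Fintype.card β ≤ n := by simpa using Fintype.card_le_of_embedding h
  let v : β ↪ Fin n := ⟨fun q => ⟨c q, (hc_lt q).trans_le hcard⟩,
    fun q q' hqq' => hc_inj (Fin.mk.inj hqq')⟩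
  have hΘvec : Measurable fun ω (i : Fin n) => Θ i ω := measurable_pi_lambda _ fun i => hΘ i
  have hperm : ∀ σ : Equiv.Perm (Fin n),
      IdentDistrib (fun ω i => Θ (σ i : ℕ) ω) (fun ω (i : Fin n) => Θ i ω) μ μ := fun σ =>
    ⟨(measurable_pi_lambda _ fun i => hΘ (σ i)).aemeasurable, hΘvec.aemeasurable, hexch σ⟩
  have hmonomial : Measurable fun w : β → ℝ => ∏ q, w q ^ E q :=
    Finset.measurable_prod _ fun q _ => (measurable_pi_apply q).pow_const (E q)
  exact (identDistrib_comp_embedding (Z := fun ω (i : Fin n) => Θ i ω) hperm h v).comp hmonomial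

theorem sum_embedding_integral_prod_zpow {β : Type*} [Fintype β]
    (hΘ : ∀ j, Measurable (Θ j))
    (hexch : IsExchangeable μ Θ n)
    (E : β → ℤ) {c : β → ℕ} (hc_inj : Function.Injective c)
    (hc_lt : ∀ q, c q < Fintype.card β) :
    ∑ h : β ↪ Fin n, ∫ ω, ∏ q, Θ (h q) ω ^ E q ∂μ =
      n.descFactorial (Fintype.card β) * ∫ ω, ∏ q, Θ (c q) ω ^ E q ∂μ := by
  rw [sum_congr rfl fun h _ =>
      (identDistrib_prod_zpow_of_injective hΘ hexch E hc_inj hc_lt h).integral_eq,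
    sum_const, card_univ, Fintype.card_embedding_eq, Fintype.card_fin, nsmul_eq_mul]

theorem integral_prod_sum_range_zpow {ι : Type*} [Fintype ι] [DecidableEq ι]
    (hΘ : ∀ j, Measurable (Θ j)) (hΘ0 : ∀ j ω, Θ j ω ≠ 0)
    (hexch : IsExchangeable μ Θ n)
    (e : ι → ℤ) (c : (p : Finpartition (univ : Finset ι)) → p.parts → ℕ)
    (hc_inj : ∀ p, Function.Injective (c p)) (hc_lt : ∀ p q, c p q < #p.parts)
    (hint : ∀ p : Finpartition (univ : Finset ι), Integrable (fun ω =>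
      (n.descFactorial #p.parts : ℝ) * ∏ q ∈ p.parts.attach, Θ (c p q) ω ^ ∑ i ∈ q.1, e i) μ) :
    ∫ ω, ∏ i, ∑ j ∈ range n, Θ j ω ^ e i ∂μ =
      ∑ p : Finpartition (univ : Finset ι), ∫ ω,
        (n.descFactorial #p.parts : ℝ) * ∏ q ∈ p.parts.attach, Θ (c p q) ω ^ ∑ i ∈ q.1, e i ∂μ := by
  have hc_lt' : ∀ p q, c p q < Fintype.card p.parts := by simpa using hc_lt
  have hmonomial_int : ∀ (p : Finpartition (univ : Finset ι)) (h : p.parts ↪ Fin n),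
      Integrable (fun ω => ∏ q, Θ (h q) ω ^ ∑ i ∈ q.1, e i) μ := by
    intro p h
    have hcard : #p.parts ≤ n := by simpa using Fintype.card_le_of_embedding h
    have hfact : IsUnit (n.descFactorial #p.parts : ℝ) := by
      simpa [Nat.descFactorial_eq_zero_iff_lt] using hcard
    refine (identDistrib_prod_zpow_of_injective hΘ hexch _ (hc_inj p) (hc_lt' p)
      h).integrable_iff.2 ?_
    simpa only [integrable_const_mul_iff hfact, univ_eq_attach] using hint p
  calc ∫ ω, ∏ i, ∑ j ∈ range n, Θ j ω ^ e i ∂μ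
      = ∫ ω, ∑ p : Finpartition (univ : Finset ι), ∑ h : p.parts ↪ Fin n,
          ∏ q, Θ (h q) ω ^ ∑ i ∈ q.1, e i ∂μ := by
        congr 1 with ω
        rw [← prod_sum_zpow_eq_sum_finpartition (a := fun j : Fin n => Θ j ω) (fun j => hΘ0 j ω)]
        exact prod_congr rfl fun i _ => (Fin.sum_univ_eq_sum_range _ n).symm
    _ = ∑ p : Finpartition (univ : Finset ι), ∑ h : p.parts ↪ Fin n,
          ∫ ω, ∏ q, Θ (h q) ω ^ ∑ i ∈ q.1, e i ∂μ := by
        rw [integral_finsetSum _ fun p _ => integrable_finsetSum _ fun h _ => hmonomial_int p h]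
        exact sum_congr rfl fun p _ => integral_finsetSum _ fun h _ => hmonomial_int p h
    _ = _ := by
        refine sum_congr rfl fun p _ => ?_
        rw [sum_embedding_integral_prod_zpow hΘ hexch _ (hc_inj p) (hc_lt' p), integral_const_mul,
          Fintype.card_coe, univ_eq_attach]

end Stratum

theorem hasSum_setIntegral_fiber {Ω E ι : Type*} [MeasurableSpace Ω] [NormedAddCommGroup E]
    [NormedSpace ℝ E] {μ : Measure Ω} [Countable ι] [MeasurableSpace ι]
    [MeasurableSingletonClass ι] {N : Ω → ι} (hN : Measurable N) {f : Ω → E}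
    (hf : Integrable f μ) :
    HasSum (fun n => ∫ ω in {ω | N ω = n}, f ω ∂μ) (∫ ω, f ω ∂μ) := by
  have hU : ⋃ n, {ω | N ω = n} = Set.univ := Set.iUnion_eq_univ_iff.2 fun ω => ⟨N ω, rfl⟩
  have hfU : IntegrableOn f (⋃ n, {ω | N ω = n}) μ := by rw [hU]; exact hf.integrableOn
  have hsum := hasSum_integral_iUnion (s := fun n => {ω | N ω = n})
    (fun n => hN (measurableSet_singleton n)) (pairwise_disjoint_fiber N) hfU
  rwa [hU, Measure.restrict_univ] at hsum

theorem abelian_condition_for_exchangeable_ensemble_general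
    {Ω : Type*} [MeasurableSpace Ω] (P : Measure Ω)
    (N : Ω → ℕ) (hN : Measurable N)
    (Θ : ℕ → Ω → ℝ) (hΘmeas : ∀ j, Measurable (Θ j)) (hΘpos : ∀ j ω, 0 < Θ j ω)
    (hexch : ∀ (n : ℕ) (σ : Equiv.Perm (Fin n)),
      Measure.map (fun ω => fun i : Fin n => Θ (σ i : ℕ) ω) (P.restrict {ω | N ω = n}) =
      Measure.map (fun ω => fun i : Fin n => Θ (i : ℕ) ω) (P.restrict {ω | N ω = n}))
    (k : ℕ) (g : Fin k → ℕ)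
    (ι : (p : Finpartition (Finset.univ : Finset (Fin k))) → ↥p.parts → ℕ)
    (hι_inj : ∀ p, Function.Injective (ι p))
    (hι_lt : ∀ p q, ι p q < p.parts.card)
    (hInt₁ : Integrable
      (fun ω => ∏ i : Fin k, ∑ j ∈ Finset.range (N ω), Θ j ω ^ ((1 : ℤ) - (g i : ℤ))) P)
    (hInt₂ : ∀ p : Finpartition (Finset.univ : Finset (Fin k)),
      Integrable (fun ω => (Nat.descFactorial (N ω) p.parts.card : ℝ) *
        ∏ q ∈ p.parts.attach,
          Θ (ι p q) ω ^ (∑ i ∈ (q : Finset (Fin k)), ((1 : ℤ) - (g i : ℤ)))) P) :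
    ∫ ω, (∏ i : Fin k, ∑ j ∈ Finset.range (N ω), Θ j ω ^ ((1 : ℤ) - (g i : ℤ))) ∂P =
      ∑ p : Finpartition (Finset.univ : Finset (Fin k)),
        ∫ ω, (Nat.descFactorial (N ω) p.parts.card : ℝ) *
          ∏ q ∈ p.parts.attach,
            Θ (ι p q) ω ^ (∑ i ∈ (q : Finset (Fin k)), ((1 : ℤ) - (g i : ℤ))) ∂P := by
  have hstratum : ∀ n, ∫ ω in {ω | N ω = n},
      (∏ i : Fin k, ∑ j ∈ range (N ω), Θ j ω ^ ((1 : ℤ) - (g i : ℤ))) ∂P =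
      ∑ p : Finpartition (univ : Finset (Fin k)), ∫ ω in {ω | N ω = n},
        (N ω).descFactorial #p.parts *
          ∏ q ∈ p.parts.attach, Θ (ι p q) ω ^ (∑ i ∈ q.1, ((1 : ℤ) - (g i : ℤ))) ∂P := by
    intro n
    have hs : MeasurableSet {ω | N ω = n} := hN (measurableSet_singleton n)
    refine (setIntegral_congr_fun hs fun ω (hω : N ω = n) => ?_).trans <|
      (integral_prod_sum_range_zpow hΘmeas (fun j ω => (hΘpos j ω).ne') (hexch n)
        (fun i => 1 - (g i : ℤ)) ι hι_inj hι_lt fun p => (hInt₂ p).integrableOn.congr ?_).trans <|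
      sum_congr rfl fun p _ => setIntegral_congr_fun hs fun ω (hω : N ω = n) => ?_
    · rw [hω]
    · filter_upwards [ae_restrict_mem hs] with ω (hω : N ω = n)
      rw [hω]
    · rw [hω]
  have hsum := hasSum_sum (s := univ) fun p _ => hasSum_setIntegral_fiber hN (hInt₂ p)
  rw [← funext hstratum] at hsum
  exact (hasSum_setIntegral_fiber hN hInt₁).unique hsum

theorem abelian_condition_for_exchangeable_ensemble
    {Ω : Type*} [MeasurableSpace Ω] (P : Measure Ω) [IsProbabilityMeasure P]
    (N : Ω → ℕ) (hN : Measurable N)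
    (Θ : ℕ → Ω → ℝ) (hΘmeas : ∀ j, Measurable (Θ j)) (hΘpos : ∀ j ω, 0 < Θ j ω)
    (hexch : ∀ (n : ℕ) (σ : Equiv.Perm (Fin n)),
      Measure.map (fun ω => fun i : Fin n => Θ (σ i : ℕ) ω) (P.restrict {ω | N ω = n}) =
      Measure.map (fun ω => fun i : Fin n => Θ (i : ℕ) ω) (P.restrict {ω | N ω = n}))
    (k : ℕ) (g : Fin k → ℕ)
    (ι : (p : Finpartition (Finset.univ : Finset (Fin k))) → ↥p.parts → ℕ)
    (hι_inj : ∀ p, Function.Injective (ι p))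
    (hι_lt : ∀ p q, ι p q < p.parts.card)
    (hInt₁ : Integrable
      (fun ω => ∏ i : Fin k, ∑ j ∈ Finset.range (N ω), Θ j ω ^ ((1 : ℤ) - (g i : ℤ))) P)
    (hInt₂ : ∀ p : Finpartition (Finset.univ : Finset (Fin k)),
      Integrable (fun ω => (Nat.descFactorial (N ω) p.parts.card : ℝ) *
        ∏ q ∈ p.parts.attach,
          Θ (ι p q) ω ^ (∑ i ∈ (q : Finset (Fin k)), ((1 : ℤ) - (g i : ℤ)))) P) :
    ∫ ω, (∏ i : Fin k, ∑ j ∈ Finset.range (N ω), Θ j ω ^ ((1 : ℤ) - (g i : ℤ))) ∂P =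
      ∑ p : Finpartition (Finset.univ : Finset (Fin k)),
        ∫ ω, (Nat.descFactorial (N ω) p.parts.card : ℝ) *
          ∏ q ∈ p.parts.attach,
            Θ (ι p q) ω ^ (∑ i ∈ (q : Finset (Fin k)), ((1 : ℤ) - (g i : ℤ))) ∂P :=
  abelian_condition_for_exchangeable_ensemble_general P N hN Θ hΘmeas hΘpos hexch k g ι hι_inj hι_lt
    hInt₁ hInt₂
end

section
/- Let b : ℕ → ℝ satisfy b 0 = 0 and b n ≥ 0 for all n, let k ∈ ℕ, and assume the series ∑_m (b m)·m^k is summable. Let c be the exponential coefficient sequence of b. Then c n ≥ 0 for all n, the series ∑_n (c n)·n^k is summable, ∑_n c n = Real.exp(∑_m b m), and ∑_n (c n)·n^k = Real.exp(∑_m b m) · ∑_p ∏_{q ∈ p.parts} ( ∑_m (b m)·m^(q.card) ), where the last sum runs over all finpartitions p of the full finset of Fin k. -/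
/-!
Solving the recursion gives `c n = ∑_{ℓ ≤ n} b^{*ℓ}(n) / ℓ!`, where `b^{*ℓ}` is the `ℓ`-fold
convolution power of `b` (the coefficients of `exp (∑ m, b m X^m)`). With nonnegative weights all
sums may be taken in `ℝ≥0∞`, where they commute freely:
`∑ n, b^{*ℓ}(n) n^k = ∑_{v : Fin ℓ → ℕ} (∏ i, b (v i)) (∑ i, v i)^k`. Expanding `(∑ i, v i)^k` as a
sum over maps `g : Fin k → Fin ℓ` factors the sum over `v` into `∏ i, x_{|g⁻¹ i|}` with
`x_d = ∑ m, b m m^d`. Grouping the maps `g` by their kernel partition `p`, which is the kernel of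
exactly `ℓ.descFactorial |p|` of them, and then summing over `ℓ` produces
`(∑ j, x_0^j / j!) ∑_p ∏_{q ∈ p} x_{|q|} = exp x_0 ∑_p ∏_{q ∈ p} x_{|q|}`.
-/

open Finset Finset.Nat
open scoped ENNReal Nat

namespace Finset.Nat

theorem sum_antidiagonalTuple_succ {M : Type*} [AddCommMonoid M] (ℓ n : ℕ)
    (f : (Fin (ℓ + 1) → ℕ) → M) :
    ∑ v ∈ antidiagonalTuple (ℓ + 1) n, f v =
      ∑ p ∈ antidiagonal n, ∑ w ∈ antidiagonalTuple ℓ p.2, f (Fin.cons p.1 w) := by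
  rw [sum_sigma']
  refine sum_nbij' (fun v => ⟨(v 0, n - v 0), Fin.tail v⟩) (fun x => Fin.cons x.1.1 x.2)
    ?_ ?_ ?_ ?_ ?_
  · intro v hv
    have : v 0 + ∑ i, Fin.tail v i = n := by
      rw [← (mem_antidiagonalTuple.1 hv), Fin.sum_univ_succ]; rfl
    simp only [mem_sigma, HasAntidiagonal.mem_antidiagonal, mem_antidiagonalTuple]
    omega
  · rintro ⟨⟨m, r⟩, w⟩ hx
    simp only [mem_sigma, HasAntidiagonal.mem_antidiagonal, mem_antidiagonalTuple] at hx ⊢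
    rw [Fin.sum_cons, hx.2, hx.1]
  · intro v _
    simp
  · rintro ⟨⟨m, r⟩, w⟩ hx
    simp only [mem_sigma, HasAntidiagonal.mem_antidiagonal] at hx
    simp [← hx.1]
  · intro v _
    simp

theorem sum_antidiagonalTuple_comp_perm {M : Type*} [AddCommMonoid M] (ℓ n : ℕ)
    (σ : Equiv.Perm (Fin ℓ)) (f : (Fin ℓ → ℕ) → M) :
    ∑ v ∈ antidiagonalTuple ℓ n, f (v ∘ σ) = ∑ v ∈ antidiagonalTuple ℓ n, f v := by
  refine sum_nbij' (· ∘ σ) (· ∘ σ.symm) ?_ ?_ ?_ ?_ (fun _ _ => rfl) <;>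
    intro v hv
  · simpa [mem_antidiagonalTuple, Equiv.sum_comp σ v] using hv
  · simpa [mem_antidiagonalTuple, Equiv.sum_comp σ.symm v] using hv
  · ext; simp
  · ext; simp

end Finset.Nat

section ConvolutionPower

variable {R : Type*} [CommSemiring R] (b : ℕ → R)

/-- The `n`-th coefficient of `(∑ m, b m * X ^ m) ^ ℓ`. -/
def convPow (ℓ n : ℕ) : R :=
  ∑ v ∈ antidiagonalTuple ℓ n, ∏ i, b (v i)

theorem convPow_nonneg [PartialOrder R] [IsOrderedRing R] {b : ℕ → R} (hb : ∀ m, 0 ≤ b m)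
    (ℓ n : ℕ) : 0 ≤ convPow b ℓ n :=
  sum_nonneg fun _ _ => prod_nonneg fun _ _ => hb _

theorem convPow_zero_left (n : ℕ) : convPow b 0 n = if n = 0 then 1 else 0 := by
  cases n <;> simp [convPow]

variable {b}

theorem convPow_eq_zero_of_lt (hb0 : b 0 = 0) {ℓ n : ℕ} (h : n < ℓ) : convPow b ℓ n = 0 := by
  refine sum_eq_zero fun v hv => ?_
  obtain ⟨i, hi⟩ : ∃ i, v i = 0 := by
    by_contra! hpos
    have : ℓ ≤ ∑ i, v i := by
      simpa using sum_le_sum fun i (_ : i ∈ univ) => Nat.one_le_iff_ne_zero.2 (hpos i)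
    rw [mem_antidiagonalTuple.1 hv] at this
    omega
  exact prod_eq_zero (mem_univ i) (by rw [hi, hb0])

variable (b)

theorem sum_antidiagonalTuple_coord_mul_prod (ℓ n : ℕ) (i : Fin (ℓ + 1)) :
    ∑ v ∈ antidiagonalTuple (ℓ + 1) n, (v i : R) * ∏ j, b (v j) =
      ∑ p ∈ antidiagonal n, (p.1 : R) * b p.1 * convPow b ℓ p.2 := by
  calc ∑ v ∈ antidiagonalTuple (ℓ + 1) n, (v i : R) * ∏ j, b (v j)
      = ∑ v ∈ antidiagonalTuple (ℓ + 1) n,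
          ((v ∘ Equiv.swap 0 i) 0 : R) * ∏ j, b ((v ∘ Equiv.swap 0 i) j) := by
        refine sum_congr rfl fun v _ => ?_
        simp only [Function.comp_apply, Equiv.swap_apply_left,
          Equiv.prod_comp (Equiv.swap 0 i) fun j => b (v j)]
    _ = ∑ v ∈ antidiagonalTuple (ℓ + 1) n, (v 0 : R) * ∏ j, b (v j) :=
        sum_antidiagonalTuple_comp_perm _ _ _ fun v => (v 0 : R) * ∏ j, b (v j)
    _ = _ := by
        rw [sum_antidiagonalTuple_succ]
        refine sum_congr rfl fun p _ => ?_
        simp [convPow, mul_sum, Fin.prod_univ_succ, mul_assoc]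

/-- Each of the `ℓ + 1` factors contributes equally to `n = ∑ i, v i`. -/
theorem natCast_mul_convPow_succ (ℓ n : ℕ) :
    (n : R) * convPow b (ℓ + 1) n =
      (ℓ + 1) * ∑ p ∈ antidiagonal n, (p.1 : R) * b p.1 * convPow b ℓ p.2 := by
  have hn : ∀ v ∈ antidiagonalTuple (ℓ + 1) n,
      (n : R) * ∏ j, b (v j) = ∑ i, (v i : R) * ∏ j, b (v j) := by
    intro v hv
    rw [← sum_mul, ← (mem_antidiagonalTuple.1 hv), Nat.cast_sum]
  rw [convPow, mul_sum, sum_congr rfl hn, sum_comm]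
  simp [sum_antidiagonalTuple_coord_mul_prod]

end ConvolutionPower

section ExpCoeff

variable {K : Type*} [Field K] (b : ℕ → K)

/-- The coefficients of `exp (∑ m, b m * X ^ m) = ∑ ℓ, (∑ m, b m * X ^ m) ^ ℓ / ℓ!`; truncating at
`ℓ ≤ n` loses nothing only when `b 0 = 0`. -/
def expCoeff (n : ℕ) : K :=
  ∑ ℓ ∈ range (n + 1), convPow b ℓ n / ℓ !

theorem expCoeff_zero : expCoeff b 0 = 1 := by
  simp [expCoeff, convPow_zero_left]

variable {b}

theorem sum_range_convPow_div_factorial (hb0 : b 0 = 0) {n N : ℕ} (h : n ≤ N) :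
    ∑ ℓ ∈ range (N + 1), convPow b ℓ n / ℓ ! = expCoeff b n := by
  refine (sum_subset (range_subset_range.2 (by omega)) fun ℓ hN hn => ?_).symm
  rw [mem_range] at hN hn
  rw [convPow_eq_zero_of_lt hb0 (by omega), zero_div]

theorem natCast_mul_expCoeff [CharZero K] (hb0 : b 0 = 0) (n : ℕ) :
    (n : K) * expCoeff b n = ∑ p ∈ antidiagonal n, (p.1 : K) * b p.1 * expCoeff b p.2 := by
  calc (n : K) * expCoeff b n
      = ∑ ℓ ∈ range (n + 2), (n : K) * convPow b ℓ n / ℓ ! := by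
        simp_rw [← sum_range_convPow_div_factorial hb0 (Nat.le_succ n), mul_sum, mul_div_assoc]
    _ = ∑ ℓ ∈ range (n + 1),
          (∑ p ∈ antidiagonal n, (p.1 : K) * b p.1 * convPow b ℓ p.2) / ℓ ! := by
        have hℓ0 : (n : K) * convPow b 0 n = 0 := by
          rw [convPow_zero_left]; split_ifs with h <;> simp [h]
        rw [sum_range_succ', hℓ0, zero_div, add_zero]
        refine sum_congr rfl fun ℓ _ => ?_
        rw [natCast_mul_convPow_succ, Nat.factorial_succ, Nat.cast_mul]
        field_simp
        push_cast
        ring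
    _ = ∑ p ∈ antidiagonal n, (p.1 : K) * b p.1 * expCoeff b p.2 := by
        simp_rw [sum_div]
        rw [sum_comm]
        refine sum_congr rfl fun p hp => ?_
        rw [← sum_range_convPow_div_factorial hb0 (HasAntidiagonal.antidiagonal.snd_le hp), mul_sum]
        simp_rw [mul_div_assoc]

theorem eq_expCoeff_of_recursion [CharZero K] (hb0 : b 0 = 0) {c : ℕ → K} (hc0 : c 0 = 1)
    (hc : ∀ n : ℕ, 1 ≤ n → (n : K) * c n = ∑ m ∈ Icc 1 n, (m : K) * b m * c (n - m)) :
    c = expCoeff b := by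
  funext n
  induction n using Nat.strong_induction_on with
  | _ n ih =>
    rcases Nat.eq_zero_or_pos n with rfl | hn
    · rw [hc0, expCoeff_zero]
    refine mul_left_cancel₀ (Nat.cast_ne_zero.2 hn.ne') ?_
    rw [hc n hn, natCast_mul_expCoeff hb0, Nat.sum_antidiagonal_eq_sum_range_succ_mk]
    calc ∑ m ∈ Icc 1 n, (m : K) * b m * c (n - m)
        = ∑ m ∈ Icc 1 n, (m : K) * b m * expCoeff b (n - m) :=
          sum_congr rfl fun m hm => by rw [ih (n - m) (by simp at hm; omega)]
      _ = ∑ m ∈ range (n + 1), (m : K) * b m * expCoeff b (n - m) :=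
          sum_subset (fun m hm => by simp at hm ⊢; omega) fun m hm hm' => by
            obtain rfl : m = 0 := by simp at hm hm'; omega
            simp

theorem expCoeff_nonneg [LinearOrder K] [IsStrictOrderedRing K] (hb : ∀ m, 0 ≤ b m) (n : ℕ) :
    0 ≤ expCoeff b n :=
  sum_nonneg fun _ _ => div_nonneg (convPow_nonneg hb _ _) (Nat.cast_nonneg _)

end ExpCoeff

namespace Finpartition

theorem parts_eq_image_part {α : Type*} [DecidableEq α] {s : Finset α}
    (P : Finpartition s) : P.parts = s.image P.part := by
  ext q
  refine ⟨fun hq => ?_, fun hq => ?_⟩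
  · obtain ⟨a, ha⟩ := P.nonempty_of_mem_parts hq
    exact mem_image.2 ⟨a, P.le hq ha, P.part_eq_of_mem hq ha⟩
  · obtain ⟨a, ha, rfl⟩ := mem_image.1 hq
    exact P.part_mem.2 ha

theorem ext_part_s7 {α : Type*} [DecidableEq α] {s : Finset α}
    {P Q : Finpartition s} (h : ∀ a, P.part a = Q.part a) : P = Q := by
  ext1
  rw [P.parts_eq_image_part, Q.parts_eq_image_part, funext h]

theorem sum_prod_parts_univ_fin_zero {R : Type*} [CommSemiring R] (f : Finset (Fin 0) → R) :
    ∑ p : Finpartition (univ : Finset (Fin 0)), ∏ q ∈ p.parts, f q = 1 := by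
  have hparts (p : Finpartition (univ : Finset (Fin 0))) : p.parts = ∅ :=
    p.parts_eq_empty_iff.2 univ_eq_empty
  have : Subsingleton (Finpartition (univ : Finset (Fin 0))) :=
    ⟨fun p q => Finpartition.ext (by rw [hparts, hparts])⟩
  rw [Fintype.sum_subsingleton _ ⊥, hparts, prod_empty]

end Finpartition

section KernelPartition

variable {α β : Type*} [Fintype α] [DecidableEq α] [DecidableEq β]

def kerPartition (g : α → β) : Finpartition (univ : Finset α) :=
  @Finpartition.ofSetoid _ _ _ (Setoid.ker g) fun a b => decEq (g a) (g b)

theorem mem_part_kerPartition {g : α → β} {a t : α} : t ∈ (kerPartition g).part a ↔ g a = g t :=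
  Finpartition.mem_part_ofSetoid_iff_rel

theorem kerPartition_parts (g : α → β) :
    (kerPartition g).parts = (univ.image g).image fun i => ({t | g t = i} : Finset α) := by
  rw [Finpartition.parts_eq_image_part, image_image]
  refine image_congr fun a _ => ?_
  ext t
  simp [mem_part_kerPartition, eq_comm]

theorem kerPartition_comp_part (p : Finpartition (univ : Finset α)) (e : p.parts ↪ β) :
    kerPartition (fun t => e ⟨p.part t, p.part_mem.2 (mem_univ t)⟩) = p := by
  refine Finpartition.ext_part_s7 fun a => ?_
  ext t
  rw [mem_part_kerPartition, e.injective.eq_iff, Subtype.mk.injEq, eq_comm,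
    ← p.mem_part_iff_part_eq_part (mem_univ t) (mem_univ a)]

variable [Fintype β]

theorem prod_card_fiber_eq_prod_kerPartition {M : Type*} [CommMonoid M] (X : ℕ → M) (g : α → β) :
    ∏ i, X #{t | g t = i} =
      X 0 ^ (Fintype.card β - #(kerPartition g).parts) * ∏ q ∈ (kerPartition g).parts, X #q := by
  have hinj : Set.InjOn (fun i => ({t | g t = i} : Finset α)) (univ.image g) := by
    intro i hi j _ hij
    obtain ⟨a, -, rfl⟩ := mem_image.1 hi
    have : a ∈ ({t | g t = g a} : Finset α) := by simp
    simpa [hij] using this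
  have hcompl : ∀ i ∈ (univ.image g)ᶜ, X #{t | g t = i} = X 0 := by
    intro i hi
    rw [card_eq_zero.2 (filter_eq_empty_iff.2 fun t _ h => by simp [← h] at hi)]
  rw [kerPartition_parts, prod_image hinj, card_image_of_injOn hinj, mul_comm,
    ← prod_mul_prod_compl (univ.image g), prod_congr rfl hcompl, prod_const, card_compl]

/-- Functions with kernel partition `p` correspond to injections `p.parts ↪ β`. -/
theorem card_kerPartition_eq (p : Finpartition (univ : Finset α)) :
    #{g : α → β | kerPartition g = p} = (Fintype.card β).descFactorial #p.parts := by
  rw [← Fintype.card_coe p.parts, ← Fintype.card_embedding_eq, ← card_univ]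
  refine (card_nbij (fun e t => e ⟨p.part t, p.part_mem.2 (mem_univ t)⟩)
    (fun e _ => by simp [kerPartition_comp_part]) ?_ ?_).symm
  · intro e _ e' _ h
    ext ⟨q, hq⟩
    obtain ⟨a, ha⟩ := p.nonempty_of_mem_parts hq
    simpa [p.part_eq_of_mem hq ha] using congrFun h a
  · intro g hg
    simp only [coe_filter, mem_univ, true_and] at hg
    subst hg
    have rep : ∀ q : (kerPartition g).parts, ∃ a, a ∈ q.1 :=
      fun q => (kerPartition g).nonempty_of_mem_parts q.2
    choose r hr using rep
    have hpart : ∀ q : (kerPartition g).parts, ∀ t ∈ q.1, g (r q) = g t := by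
      intro q t ht
      rw [← mem_part_kerPartition, (kerPartition g).part_eq_of_mem q.2 (hr q)]
      exact ht
    refine ⟨⟨fun q => g (r q), fun q q' h => Subtype.ext ?_⟩, mem_coe.2 (mem_univ _), ?_⟩
    · have : r q' ∈ q.1 := by
        rw [← (kerPartition g).part_eq_of_mem q.2 (hr q), mem_part_kerPartition]
        exact h
      exact (kerPartition g).eq_of_mem_parts q.2 q'.2 this (hr q')
    · funext t
      exact hpart _ t ((kerPartition g).mem_part (mem_univ t))

theorem sum_prod_card_fiber_eq_sum_finpartition {R : Type*} [CommSemiring R] (X : ℕ → R) :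
    ∑ g : α → β, ∏ i, X #{t | g t = i} =
      ∑ p : Finpartition (univ : Finset α), (Fintype.card β).descFactorial #p.parts *
        (X 0 ^ (Fintype.card β - #p.parts) * ∏ q ∈ p.parts, X #q) := by
  rw [← sum_fiberwise univ kerPartition]
  refine sum_congr rfl fun p _ => ?_
  have hconst : ∀ g ∈ ({g | kerPartition g = p} : Finset (α → β)),
      ∏ i, X #{t | g t = i} = X 0 ^ (Fintype.card β - #p.parts) * ∏ q ∈ p.parts, X #q :=
    fun g hg => by rw [prod_card_fiber_eq_prod_kerPartition, (mem_filter.1 hg).2]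
  rw [sum_congr rfl hconst, sum_const, card_kerPartition_eq, nsmul_eq_mul]

end KernelPartition

theorem ENNReal.tsum_fin_pi_prod {α : Type*} :
    ∀ {ℓ : ℕ} (G : Fin ℓ → α → ℝ≥0∞), ∑' v : Fin ℓ → α, ∏ i, G i (v i) = ∏ i, ∑' a, G i a
  | 0, G => by simp
  | ℓ + 1, G => by
    rw [← (Fin.consEquiv fun _ => α).tsum_eq, ENNReal.tsum_prod', Fin.prod_univ_succ,
      ← ENNReal.tsum_fin_pi_prod fun i => G i.succ, ← ENNReal.tsum_mul_right]
    refine tsum_congr fun a => ?_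
    rw [← ENNReal.tsum_mul_left]
    simp [Fin.consEquiv, Fin.prod_univ_succ]

theorem ENNReal.tsum_sum_antidiagonalTuple (ℓ : ℕ) (F : (Fin ℓ → ℕ) → ℝ≥0∞) :
    ∑' n, ∑ v ∈ antidiagonalTuple ℓ n, F v = ∑' v, F v := by
  rw [← (sigmaAntidiagonalTupleEquivTuple ℓ).tsum_eq, ENNReal.tsum_sigma']
  exact tsum_congr fun n => (Finset.tsum_subtype _ F).symm

theorem sum_pow_eq_sum_prod_pow_card_fiber {ι R : Type*} [Fintype ι] [DecidableEq ι]
    [CommSemiring R] (a : ι → R) (k : ℕ) :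
    (∑ i, a i) ^ k = ∑ g : Fin k → ι, ∏ i, a i ^ #{t | g t = i} := by
  rw [Fintype.sum_pow]
  refine sum_congr rfl fun g _ => ?_
  rw [← prod_fiberwise' univ g a]
  exact prod_congr rfl fun i _ => prod_const _

/-- The argument `x_d` of the complete Bell polynomials. -/
noncomputable def powerMoment (B : ℕ → ℝ≥0∞) (d : ℕ) : ℝ≥0∞ :=
  ∑' m, B m * (m : ℝ≥0∞) ^ d

theorem tsum_convPow_mul_pow (B : ℕ → ℝ≥0∞) (ℓ k : ℕ) :
    ∑' n, convPow B ℓ n * (n : ℝ≥0∞) ^ k =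
      ∑ p : Finpartition (univ : Finset (Fin k)), ℓ.descFactorial #p.parts *
        (powerMoment B 0 ^ (ℓ - #p.parts) * ∏ q ∈ p.parts, powerMoment B #q) := by
  calc ∑' n, convPow B ℓ n * (n : ℝ≥0∞) ^ k
      = ∑' v : Fin ℓ → ℕ, (∏ i, B (v i)) * (∑ i, (v i : ℝ≥0∞)) ^ k := by
        rw [← ENNReal.tsum_sum_antidiagonalTuple]
        refine tsum_congr fun n => ?_
        rw [convPow, sum_mul]
        refine sum_congr rfl fun v hv => ?_
        rw [← mem_antidiagonalTuple.1 hv, Nat.cast_sum]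
    _ = ∑ g : Fin k → Fin ℓ, ∑' v : Fin ℓ → ℕ, ∏ i, B (v i) * (v i : ℝ≥0∞) ^ #{t | g t = i} := by
        rw [← Summable.tsum_finsetSum fun _ _ => ENNReal.summable]
        refine tsum_congr fun v => ?_
        rw [sum_pow_eq_sum_prod_pow_card_fiber, mul_sum]
        simp_rw [prod_mul_distrib]
    _ = ∑ g : Fin k → Fin ℓ, ∏ i, powerMoment B #{t | g t = i} :=
        sum_congr rfl fun g _ =>
          ENNReal.tsum_fin_pi_prod fun i m => B m * (m : ℝ≥0∞) ^ #{t | g t = i}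
    _ = _ := by
        rw [sum_prod_card_fiber_eq_sum_finpartition, Fintype.card_fin]

theorem ENNReal.tsum_descFactorial_mul_pow_div_factorial (x : ℝ≥0∞) (r : ℕ) :
    ∑' ℓ : ℕ, ℓ.descFactorial r * x ^ (ℓ - r) / ℓ ! = ∑' j : ℕ, x ^ j / j ! := by
  rw [← (add_left_injective r).tsum_eq fun ℓ hℓ => ?_]
  · refine tsum_congr fun j => ?_
    rw [← Nat.factorial_mul_descFactorial (Nat.le_add_left r j), Nat.add_sub_cancel,
      Nat.cast_mul, mul_comm (j ! : ℝ≥0∞), ENNReal.mul_div_mul_left]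
    · simp [Nat.descFactorial_eq_zero_iff_lt]
    · exact ENNReal.natCast_ne_top _
  · by_contra hℓ'
    have hlt : ℓ < r := by
      by_contra! h
      exact hℓ' ⟨ℓ - r, Nat.sub_add_cancel h⟩
    exact hℓ (by simp [Nat.descFactorial_eq_zero_iff_lt.2 hlt])

theorem ENNReal.tsum_ofReal_pow_div_factorial {x : ℝ} (hx : 0 ≤ x) :
    ∑' j : ℕ, ENNReal.ofReal x ^ j / j ! = ENNReal.ofReal (Real.exp x) := by
  rw [Real.exp_eq_exp_ℝ, ← (NormedSpace.expSeries_div_hasSum_exp x).tsum_eq,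
    ENNReal.ofReal_tsum_of_nonneg (fun j => by positivity) (Real.summable_pow_div_factorial x)]
  refine tsum_congr fun j => ?_
  rw [ENNReal.ofReal_div_of_pos (by positivity), ENNReal.ofReal_pow hx, ENNReal.ofReal_natCast]

theorem tsum_tsum_convPow_div_factorial_mul_pow (B : ℕ → ℝ≥0∞) (k : ℕ) :
    ∑' n, (∑' ℓ, convPow B ℓ n / ℓ !) * (n : ℝ≥0∞) ^ k =
      (∑' j : ℕ, powerMoment B 0 ^ j / j !) *
        ∑ p : Finpartition (univ : Finset (Fin k)), ∏ q ∈ p.parts, powerMoment B #q := by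
  calc ∑' n, (∑' ℓ, convPow B ℓ n / ℓ !) * (n : ℝ≥0∞) ^ k
      = ∑' ℓ, (∑' n, convPow B ℓ n * (n : ℝ≥0∞) ^ k) / ℓ ! := by
        simp_rw [← ENNReal.tsum_mul_right, ENNReal.div_eq_inv_mul, ← ENNReal.tsum_mul_left]
        rw [ENNReal.tsum_comm]
        exact tsum_congr fun ℓ => tsum_congr fun n => by ring
    _ = ∑ p : Finpartition (univ : Finset (Fin k)),
          (∑' ℓ : ℕ, ℓ.descFactorial #p.parts * powerMoment B 0 ^ (ℓ - #p.parts) / ℓ !) *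
            ∏ q ∈ p.parts, powerMoment B #q := by
        simp_rw [tsum_convPow_mul_pow, ENNReal.div_eq_inv_mul, mul_sum, ← ENNReal.tsum_mul_right]
        rw [← Summable.tsum_finsetSum fun _ _ => ENNReal.summable]
        exact tsum_congr fun ℓ => sum_congr rfl fun p _ => by ring
    _ = _ := by
        simp_rw [ENNReal.tsum_descFactorial_mul_pow_div_factorial, mul_sum]

theorem hasSum_of_tsum_ofReal_eq {ι : Type*} {f : ι → ℝ} (hf : ∀ i, 0 ≤ f i) {a : ℝ}
    (ha : 0 ≤ a) (h : ∑' i, ENNReal.ofReal (f i) = ENNReal.ofReal a) : HasSum f a := by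
  have hsum : Summable f := (ENNReal.summable_toReal (h ▸ ENNReal.ofReal_ne_top)).congr
    fun i => ENNReal.toReal_ofReal (hf i)
  rw [← ENNReal.ofReal_tsum_of_nonneg hf hsum,
    ENNReal.ofReal_eq_ofReal_iff (tsum_nonneg hf) ha] at h
  exact h ▸ hsum.hasSum

section RealWeights

variable {b : ℕ → ℝ}

theorem ofReal_convPow (hb : ∀ m, 0 ≤ b m) (ℓ n : ℕ) :
    ENNReal.ofReal (convPow b ℓ n) = convPow (fun m => ENNReal.ofReal (b m)) ℓ n := by
  rw [convPow, ENNReal.ofReal_sum_of_nonneg fun v _ => prod_nonneg fun i _ => hb _]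
  exact sum_congr rfl fun v _ => ENNReal.ofReal_prod_of_nonneg fun i _ => hb _

theorem ofReal_expCoeff (hb0 : b 0 = 0) (hb : ∀ m, 0 ≤ b m) (n : ℕ) :
    ENNReal.ofReal (expCoeff b n) =
      ∑' ℓ, convPow (fun m => ENNReal.ofReal (b m)) ℓ n / ℓ ! := by
  rw [tsum_eq_sum (s := range (n + 1)) fun ℓ hℓ => ?_, expCoeff,
    ENNReal.ofReal_sum_of_nonneg fun ℓ _ => div_nonneg (convPow_nonneg hb _ _) (by positivity)]
  · refine sum_congr rfl fun ℓ _ => ?_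
    rw [ENNReal.ofReal_div_of_pos (by positivity), ofReal_convPow hb, ENNReal.ofReal_natCast]
  · rw [convPow_eq_zero_of_lt (by simp [hb0]) (by simpa using hℓ), ENNReal.zero_div]

theorem powerMoment_ofReal (hb : ∀ m, 0 ≤ b m) {d : ℕ}
    (hd : Summable fun m : ℕ => b m * (m : ℝ) ^ d) :
    powerMoment (fun m => ENNReal.ofReal (b m)) d =
      ENNReal.ofReal (∑' m : ℕ, b m * (m : ℝ) ^ d) := by
  rw [ENNReal.ofReal_tsum_of_nonneg (fun m => mul_nonneg (hb m) (by positivity)) hd]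
  refine tsum_congr fun m => ?_
  rw [ENNReal.ofReal_mul (hb m), ENNReal.ofReal_pow (Nat.cast_nonneg m), ENNReal.ofReal_natCast]

theorem summable_mul_pow_of_le (hb0 : b 0 = 0) (hb : ∀ m, 0 ≤ b m) {d k : ℕ} (hdk : d ≤ k)
    (hk : Summable fun m : ℕ => b m * (m : ℝ) ^ k) : Summable fun m : ℕ => b m * (m : ℝ) ^ d :=
  hk.of_nonneg_of_le (fun m => mul_nonneg (hb m) (by positivity)) fun m => by
    rcases m.eq_zero_or_pos with rfl | hm
    · simp [hb0]
    · exact mul_le_mul_of_nonneg_left (pow_le_pow_right₀ (by exact_mod_cast hm) hdk) (hb m)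

theorem hasSum_expCoeff_mul_pow (hb0 : b 0 = 0) (hb : ∀ m, 0 ≤ b m) {k : ℕ}
    (hk : Summable fun m : ℕ => b m * (m : ℝ) ^ k) :
    HasSum (fun n => expCoeff b n * (n : ℝ) ^ k)
      (Real.exp (∑' m, b m) * ∑ p : Finpartition (univ : Finset (Fin k)),
        ∏ q ∈ p.parts, ∑' m : ℕ, b m * (m : ℝ) ^ #q) := by
  set B := fun m => ENNReal.ofReal (b m)
  have hx (d : ℕ) : 0 ≤ ∑' m : ℕ, b m * (m : ℝ) ^ d :=
    tsum_nonneg fun m => mul_nonneg (hb m) (by positivity)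
  have hB (d : ℕ) (hd : d ≤ k) : powerMoment B d = ENNReal.ofReal (∑' m : ℕ, b m * (m : ℝ) ^ d) :=
    powerMoment_ofReal hb (summable_mul_pow_of_le hb0 hb hd hk)
  have hB0 : powerMoment B 0 = ENNReal.ofReal (∑' m, b m) := by simpa using hB 0 k.zero_le
  refine hasSum_of_tsum_ofReal_eq (fun n => mul_nonneg (expCoeff_nonneg hb n) (by positivity))
    (mul_nonneg (Real.exp_nonneg _) (sum_nonneg fun p _ => prod_nonneg fun q _ => hx _)) ?_
  calc ∑' n, ENNReal.ofReal (expCoeff b n * (n : ℝ) ^ k)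
      = ∑' n, (∑' ℓ, convPow B ℓ n / ℓ !) * (n : ℝ≥0∞) ^ k := by
        refine tsum_congr fun n => ?_
        rw [ENNReal.ofReal_mul (expCoeff_nonneg hb n), ofReal_expCoeff hb0 hb,
          ENNReal.ofReal_pow (Nat.cast_nonneg n), ENNReal.ofReal_natCast]
    _ = (∑' j : ℕ, powerMoment B 0 ^ j / j !) *
          ∑ p : Finpartition (univ : Finset (Fin k)), ∏ q ∈ p.parts, powerMoment B #q :=
        tsum_tsum_convPow_div_factorial_mul_pow B k
    _ = _ := by
        rw [hB0, ENNReal.tsum_ofReal_pow_div_factorial (tsum_nonneg hb),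
          ENNReal.ofReal_mul (Real.exp_nonneg _),
          ENNReal.ofReal_sum_of_nonneg fun p _ => prod_nonneg fun q _ => hx _]
        congr 1
        refine sum_congr rfl fun p _ => ?_
        rw [ENNReal.ofReal_prod_of_nonneg fun q _ => hx _]
        exact prod_congr rfl fun q _ => hB _ (by simpa using card_le_univ q)

end RealWeights

theorem moments_of_exponential_coefficient_distribution
    (b : ℕ → ℝ) (hb0 : b 0 = 0) (hbnn : ∀ n, 0 ≤ b n)
    (k : ℕ) (hsum : Summable (fun m : ℕ => b m * (m : ℝ) ^ k))
    (c : ℕ → ℝ) (hc0 : c 0 = 1)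
    (hc : ∀ n : ℕ, 1 ≤ n → (n : ℝ) * c n = ∑ m ∈ Finset.Icc 1 n, (m : ℝ) * b m * c (n - m)) :
    (∀ n, 0 ≤ c n) ∧
    Summable (fun n : ℕ => c n * (n : ℝ) ^ k) ∧
    ∑' n : ℕ, c n = Real.exp (∑' m : ℕ, b m) ∧
    ∑' n : ℕ, c n * (n : ℝ) ^ k =
      Real.exp (∑' m : ℕ, b m) *
        ∑ p : Finpartition (Finset.univ : Finset (Fin k)),
          ∏ q ∈ p.parts, (∑' m : ℕ, b m * (m : ℝ) ^ q.card) := by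
  obtain rfl := eq_expCoeff_of_recursion hb0 hc0 hc
  have hmoment := hasSum_expCoeff_mul_pow hb0 hbnn hsum
  have hmass := hasSum_expCoeff_mul_pow hb0 hbnn (summable_mul_pow_of_le hb0 hbnn k.zero_le hsum)
  refine ⟨expCoeff_nonneg hbnn, hmoment.summable, ?_, hmoment.tsum_eq⟩
  simpa [Finpartition.sum_prod_parts_univ_fin_zero] using hmass.tsum_eq
end

section
/- Let t, x, y ∈ ℝ with 0 < t < 1, x ≥ 0, y ≥ 0, x·t < 1 and x·y·t < 1. Then the series ∑_{n=0}^∞ ( ∑_{λ ∈ Nat.Partition n} 2^(d(λ)) · x^(ℓ(λ)) · y^(m₁(λ)) ) · t^n is summable, the family m ↦ (1 + x·t^m)/(1 − x·t^m) indexed by integers m ≥ 2 is multipliable, and ∑_{n=0}^∞ ( ∑_{λ ∈ Nat.Partition n} 2^(d(λ)) · x^(ℓ(λ)) · y^(m₁(λ)) ) · t^n = (1 + x·y·t)/(1 − x·y·t) · ∏_{m=2}^∞ (1 + x·t^m)/(1 − x·t^m), where m₁(λ) denotes the multiplicity of the part 1 in λ. -/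
/-!
Recording a partition by the multiplicities of its parts identifies partitions of all `n`
with `ℕ →₀ ℕ`, and the summand factors over the distinct parts: a part `i` occurring `m ≥ 1`
times contributes `2 cᵢ ^ m`, where `cᵢ = x tⁱ` for `i ≥ 2` and `c₁ = x y t`. The factor of a
part size is therefore `1 + ∑_{m ≥ 1} 2 cᵢ ^ m = (1 + cᵢ) / (1 - cᵢ)`, and since all terms are
nonnegative, the sum over finitely supported multiplicities is the product of these factors.
-/

open Finset Filter Topology

theorem Finset.prod_sum_eq_sum_finsupp_prod {ι α R : Type*} [Zero α] [CommSemiring R]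
    {g : ι → α → R} (hg : ∀ i, g i 0 = 1) (u : Finset ι) (t : ι → Finset α) :
    ∏ i ∈ u, ∑ a ∈ t i, g i a = ∑ f ∈ u.finsupp t, f.prod g := by
  classical
  rw [Finset.finsupp, sum_map, prod_sum]
  refine sum_congr rfl fun p _ => ?_
  rw [Function.Embedding.coeFn_mk,
    Finsupp.prod_of_support_subset _ (Finsupp.support_indicator_subset u p) _ fun i _ => hg i,
    ← prod_attach u]
  refine prod_congr rfl fun i _ => ?_
  rw [Finsupp.indicator_of_mem i.2]

theorem hasSum_finsupp_prod {ι : Type*} {g : ι → ℕ → ℝ} (hg0 : ∀ i, g i 0 = 1)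
    (hg : ∀ i m, 0 ≤ g i m) {s : ι → ℝ} (hs : ∀ i, HasSum (g i) (s i)) (hm : Multipliable s) :
    HasSum (fun f : ι →₀ ℕ => f.prod g) (∏' i, s i) := by
  have hbox (u : Finset ι) (M : ℕ) :
      ∏ i ∈ u, ∑ m ∈ range M, g i m = ∑ f ∈ u.finsupp (fun _ => range M), f.prod g :=
    prod_sum_eq_sum_finsupp_prod hg0 u _
  have hs_one_le : ∀ i, 1 ≤ s i := fun i => hg0 i ▸ le_hasSum (hs i) 0 fun m _ => hg i m
  -- Every finite set of multiplicity functions lies in a box `u.finsupp (fun _ => range M)`, and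
  -- the sum over a box is a finite product of partial sums of the factors.
  refine hasSum_of_isLUB_of_nonneg _ (fun f => Finset.prod_nonneg fun i _ => hg i _) ⟨?_, ?_⟩
  · rintro _ ⟨F, rfl⟩
    classical
    set u := F.sup Finsupp.support
    set M := F.sup (fun f => u.sup f) + 1
    have hF : F ⊆ u.finsupp (fun _ => range M) := by
      intro f hf
      refine mem_finsupp_iff.2 ⟨le_sup hf (f := Finsupp.support), fun i hi => mem_range.2 ?_⟩
      exact Nat.lt_succ_of_le
        ((le_sup hi (f := f)).trans (le_sup (f := fun f : ι →₀ ℕ => u.sup f) hf))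
    calc ∑ f ∈ F, f.prod g ≤ ∑ f ∈ u.finsupp (fun _ => range M), f.prod g :=
          sum_le_sum_of_subset_of_nonneg hF fun f _ _ => Finset.prod_nonneg fun i _ => hg i _
      _ = ∏ i ∈ u, ∑ m ∈ range M, g i m := (hbox u M).symm
      _ ≤ ∏ i ∈ u, s i := prod_le_prod (fun i _ => sum_nonneg fun m _ => hg i m)
          fun i _ => sum_le_hasSum _ (fun m _ => hg i m) (hs i)
      _ ≤ ∏' i, s i := ge_of_tendsto hm.hasProd <| eventually_atTop.2 ⟨u, fun v huv =>
          prod_le_prod_of_subset_of_one_le huv (fun i _ => zero_le_one.trans (hs_one_le i))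
            fun i _ _ => hs_one_le i⟩
  · intro b hb
    refine le_of_tendsto' hm.hasProd fun u => le_of_tendsto'
      (tendsto_finsetProd u fun i _ => (hs i).tendsto_sum_nat) fun M => ?_
    rw [hbox]
    exact hb ⟨_, rfl⟩

namespace Nat.Partition

theorem sigma_ext {p q : Σ n : ℕ, n.Partition} (h : p.2.parts = q.2.parts) : p = q := by
  obtain ⟨n, p⟩ := p
  obtain ⟨m, q⟩ := q
  obtain rfl : n = m := p.parts_sum.symm.trans (h ▸ q.parts_sum)
  exact congrArg _ (Nat.Partition.ext h)

theorem embDomain_comapDomain_toFinsupp {n : ℕ} (p : n.Partition) :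
    (p.parts.toFinsupp.comapDomain (addRightEmbedding 1)
      (addRightEmbedding 1).injective.injOn).embDomain (addRightEmbedding 1) =
      p.parts.toFinsupp := by
  refine Finsupp.embDomain_comapDomain fun i hi => ⟨i - 1, ?_⟩
  exact Nat.sub_add_cancel (p.parts_pos (Multiset.mem_toFinset.1 hi))

/-- The value at `k` is the multiplicity of the part `k + 1`. -/
noncomputable def sigmaEquivFinsupp : (Σ n : ℕ, n.Partition) ≃ (ℕ →₀ ℕ) where
  toFun p := p.2.parts.toFinsupp.comapDomain (addRightEmbedding 1)
    (addRightEmbedding 1).injective.injOn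
  invFun f := ⟨_, ⟨(f.embDomain (addRightEmbedding 1)).toMultiset, by
    intro i hi
    rw [Finsupp.mem_toMultiset, Finsupp.support_embDomain, Finset.mem_map] at hi
    obtain ⟨k, _, rfl⟩ := hi
    exact Nat.succ_pos k, rfl⟩⟩
  left_inv p := sigma_ext <| by
    simp only [embDomain_comapDomain_toFinsupp, Multiset.toFinsupp_toMultiset]
  right_inv f := by
    ext k
    change (f.embDomain (addRightEmbedding 1)).toMultiset.toFinsupp (addRightEmbedding 1 k) = f k
    rw [Finsupp.toMultiset_toFinsupp, Finsupp.embDomain_apply_self]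

theorem hasSum_toFinsupp_prod {f : ℕ → ℕ → ℝ} (hf0 : ∀ i, f (i + 1) 0 = 1)
    (hf : ∀ i m, 0 ≤ f (i + 1) m) {s : ℕ → ℝ} (hs : ∀ i, HasSum (f (i + 1)) (s i))
    (hm : Multipliable s) :
    HasSum (fun p : Σ n : ℕ, n.Partition => p.2.parts.toFinsupp.prod f) (∏' i, s i) := by
  refine (sigmaEquivFinsupp.hasSum_iff.2 (hasSum_finsupp_prod hf0 hf hs hm)).congr_fun fun p => ?_
  rw [Function.comp_apply, ← embDomain_comapDomain_toFinsupp, Finsupp.prod_embDomain]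
  rfl

end Nat.Partition

theorem hasSum_one_add_div_one_sub {K : Type*} [NormedField K] [CompleteSpace K] {c : K}
    (hc : ‖c‖ < 1) : HasSum (fun m => if m = 0 then 1 else 2 * c ^ m) ((1 + c) / (1 - c)) := by
  have hc1 : 1 - c ≠ 0 := sub_ne_zero.2 fun h => by simp [← h] at hc
  have hval : (1 + c) / (1 - c) = 2 * (1 - c)⁻¹ - 1 := by
    field_simp
    ring
  rw [hval]
  refine (((hasSum_geometric_of_norm_lt_one hc).mul_left 2).sub (hasSum_ite_eq 0 1)).congr_fun
    fun m => ?_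
  split_ifs with hm
  · subst hm
    norm_num
  · rw [sub_zero]

theorem Real.multipliable_one_add_div_one_sub {ι : Type*} {a : ι → ℝ} (ha : Summable a)
    (ha1 : ∀ i, a i ≠ 1) : Multipliable fun i => (1 + a i) / (1 - a i) := by
  have hsmall : ∀ᶠ i in Filter.cofinite, |a i| ≤ 1 / 2 :=
    ha.abs.tendsto_cofinite_zero.eventually_le_const one_half_pos
  have hb : Summable fun i => 2 * a i / (1 - a i) := by
    refine (ha.abs.mul_left 4).of_norm_bounded_eventually ?_
    filter_upwards [hsmall] with i hi
    have h1 : 1 / 2 ≤ 1 - a i := by linarith [le_abs_self (a i)]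
    rw [Real.norm_eq_abs, abs_div, abs_mul, abs_two, abs_of_pos (show 0 < 1 - a i by linarith),
      div_le_iff₀ (by linarith)]
    nlinarith [abs_nonneg (a i)]
  refine (Real.multipliable_one_add_of_summable hb).congr fun i => ?_
  have : 1 - a i ≠ 0 := sub_ne_zero.2 (ha1 i).symm
  field_simp
  ring

theorem Multiset.toFinsupp_prod_mul_pow {α R : Type*} [DecidableEq α] [CommMonoid R]
    (s : Multiset α) (a : R) (w : α → R) :
    s.toFinsupp.prod (fun i m => a * w i ^ m) = a ^ s.toFinset.card * (s.map w).prod := by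
  rw [Finsupp.prod, prod_mul_distrib, prod_const, prod_multiset_map_count]
  rfl

theorem Multiset.prod_map_pow_eq_pow_sum {M : Type*} [CommMonoid M] (s : Multiset ℕ) (t : M) :
    (s.map (t ^ ·)).prod = t ^ s.sum := by
  induction s using Multiset.induction_on with
  | empty => simp
  | cons a s ih => simp [ih, pow_add]

section PartWeight

variable {x y t : ℝ}

def partWeight (x y t : ℝ) (i : ℕ) : ℝ := x * t ^ i * if i = 1 then y else 1

theorem partWeight_one : partWeight x y t 1 = x * y * t := by
  simp only [partWeight, if_pos]
  ring

theorem partWeight_add_two (m : ℕ) : partWeight x y t (m + 2) = x * t ^ (m + 2) := by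
  simp [partWeight]

theorem partWeight_nonneg (hx : 0 ≤ x) (hy : 0 ≤ y) (ht : 0 ≤ t) (i : ℕ) :
    0 ≤ partWeight x y t i := by
  have : 0 ≤ if i = 1 then y else 1 := by split_ifs <;> positivity
  unfold partWeight
  positivity

theorem partWeight_add_one_lt_one (ht0 : 0 ≤ t) (ht1 : t ≤ 1) (hx : 0 ≤ x) (hxt : x * t < 1)
    (hxyt : x * y * t < 1) (i : ℕ) : partWeight x y t (i + 1) < 1 := by
  rcases i with _ | m
  · rwa [partWeight_one]
  · rw [partWeight_add_two]
    exact lt_of_le_of_lt (mul_le_mul_of_nonneg_left (pow_le_of_le_one ht0 ht1 (by omega)) hx) hxt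

theorem summable_partWeight (hx : 0 ≤ x) (hy : 0 ≤ y) (ht0 : 0 ≤ t) (ht1 : t < 1) :
    Summable (partWeight x y t) := by
  refine ((summable_geometric_of_lt_one ht0 ht1).mul_left (x * max y 1)).of_nonneg_of_le
    (partWeight_nonneg hx hy ht0) fun i => ?_
  have : (if i = 1 then y else 1) ≤ max y 1 := by split_ifs <;> simp
  calc partWeight x y t i ≤ x * t ^ i * max y 1 := by unfold partWeight; gcongr
    _ = x * max y 1 * t ^ i := by ring

theorem Nat.Partition.toFinsupp_prod_partWeight {n : ℕ} (p : n.Partition) :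
    p.parts.toFinsupp.prod (fun i m => if m = 0 then 1 else 2 * partWeight x y t i ^ m) =
      2 ^ p.parts.toFinset.card * x ^ Multiset.card p.parts * y ^ p.parts.count 1 * t ^ n := by
  rw [Finsupp.prod_congr (g2 := fun i m => 2 * partWeight x y t i ^ m) fun i hi =>
      if_neg (Finsupp.mem_support_iff.1 hi),
    Multiset.toFinsupp_prod_mul_pow]
  unfold partWeight
  rw [Multiset.prod_map_mul, Multiset.prod_map_mul,
    Multiset.map_const', Multiset.prod_replicate, Multiset.prod_map_pow_eq_pow_sum, p.parts_sum,
    Multiset.prod_map_eq_pow_single 1 fun i hi _ => if_neg hi, if_pos rfl]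
  ring

theorem hasSum_partition_partWeight (ht0 : 0 < t) (ht1 : t < 1) (hx : 0 ≤ x) (hy : 0 ≤ y)
    (hxt : x * t < 1) (hxyt : x * y * t < 1) :
    HasSum (fun n : ℕ => (∑ lam : n.Partition,
        (2 : ℝ) ^ lam.parts.toFinset.card * x ^ Multiset.card lam.parts *
          y ^ lam.parts.count 1) * t ^ n)
      (∏' i, (1 + partWeight x y t (i + 1)) / (1 - partWeight x y t (i + 1))) := by
  have hw_lt_one := partWeight_add_one_lt_one ht0.le ht1.le hx hxt hxyt
  have hpartitions := Nat.Partition.hasSum_toFinsupp_prod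
    (f := fun i m => if m = 0 then 1 else 2 * partWeight x y t i ^ m) (fun _ => if_pos rfl)
    (fun i m => by
      split_ifs
      · exact zero_le_one
      · exact mul_nonneg zero_le_two (pow_nonneg (partWeight_nonneg hx hy ht0.le _) _))
    (fun i => hasSum_one_add_div_one_sub
      ((Real.norm_of_nonneg (partWeight_nonneg hx hy ht0.le _)).trans_lt (hw_lt_one i)))
    (Real.multipliable_one_add_div_one_sub
      ((summable_partWeight hx hy ht0.le ht1).comp_injective (add_left_injective 1))
      fun i => (hw_lt_one i).ne)
  simpa only [← sum_mul] using hpartitions.sigma fun n => by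
    simpa only [Nat.Partition.toFinsupp_prod_partWeight, sum_mul] using hasSum_fintype _

end PartWeight

theorem partition_generating_function_doubly_refined
    (t x y : ℝ) (ht0 : 0 < t) (ht1 : t < 1) (hx : 0 ≤ x) (hy : 0 ≤ y)
    (hxt : x * t < 1) (hxyt : x * y * t < 1) :
    Summable (fun n : ℕ =>
      (∑ lam : Nat.Partition n,
        (2 : ℝ) ^ lam.parts.toFinset.card * x ^ (Multiset.card lam.parts) *
          y ^ (lam.parts.count 1)) * t ^ n) ∧
    Multipliable (fun m : ℕ =>
      (1 + x * t ^ (m + 2)) / (1 - x * t ^ (m + 2))) ∧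
    ∑' n : ℕ,
        (∑ lam : Nat.Partition n,
          (2 : ℝ) ^ lam.parts.toFinset.card * x ^ (Multiset.card lam.parts) *
            y ^ (lam.parts.count 1)) * t ^ n =
      (1 + x * y * t) / (1 - x * y * t) *
        ∏' m : ℕ, (1 + x * t ^ (m + 2)) / (1 - x * t ^ (m + 2)) := by
  have hseries := hasSum_partition_partWeight ht0 ht1 hx hy hxt hxyt
  have htail : Multipliable fun m : ℕ => (1 + x * t ^ (m + 2)) / (1 - x * t ^ (m + 2)) := by
    simp only [← partWeight_add_two (y := y)]
    exact Real.multipliable_one_add_div_one_sub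
      ((summable_partWeight hx hy ht0.le ht1).comp_injective (add_left_injective 2))
      fun m => (partWeight_add_one_lt_one ht0.le ht1.le hx hxt hxyt (m + 1)).ne
  refine ⟨hseries.summable, htail, ?_⟩
  rw [hseries.tsum_eq, tprod_eq_zero_mul' (by simpa only [partWeight_add_two] using htail),
    zero_add, partWeight_one]
  simp only [add_assoc, Nat.reduceAdd, partWeight_add_two]
end
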